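/- Let (X,d) be a c₀-roughly geodesic δ-hyperbolic metric space. There exists C ≥ 0 (depending only on δ and c₀) such that for every x ∈ X and every Cauchy–Gromov sequence (xₙ) in X there is a map γ : [0,∞) → X with γ(0) = x, with |d(γ(s),γ(t)) − |s−t|| ≤ C for all s,t ≥ 0, and with lim_{t→∞} liminf_{n→∞} (γ(t),xₙ)_x = ∞. -/

import Mathlib

open Filter

/-- The Gromov product `(x,y)_o` in a metric space. -/
noncomputable def gromovProd {X : Type*} [MetricSpace X] (o x y : X) : ℝ :=
  (dist o x + dist o y - dist x y) / 2

/-- `X` is `δ`-hyperbolic. -/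
def HyperbolicWith (X : Type*) [MetricSpace X] (δ : ℝ) : Prop :=
  ∀ w x y z : X, min (gromovProd w x y) (gromovProd w y z) - δ ≤ gromovProd w x z

/-- `X` is `C`-roughly geodesic. -/
def RoughlyGeodesicWith (X : Type*) [MetricSpace X] (C : ℝ) : Prop :=
  ∀ x y : X, ∃ a b : ℝ, a ≤ b ∧ ∃ γ : ℝ → X, γ a = x ∧ γ b = y ∧
    ∀ s ∈ Set.Icc a b, ∀ t ∈ Set.Icc a b, abs (dist (γ s) (γ t) - |s - t|) ≤ C

/-- A sequence is Cauchy–Gromov if the Gromov products `(xₙ, xₘ)_o` tend to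
infinity as `n, m → ∞`. -/
def CauchyGromov {X : Type*} [MetricSpace X] (o : X) (x : ℕ → X) : Prop :=
  ∀ M : ℝ, ∃ N : ℕ, ∀ m ≥ N, ∀ n ≥ N, M ≤ gromovProd o (x m) (x n)

/-!
Choose `N k` with `(xₘ, xₙ)ₓ ≥ k + c₀` for `m, n ≥ N k`, and let `yₖ` be the point at parameter
distance `k` from `x` on a `c₀`-rough geodesic from `x` to `x_{N k}`. Then
`(yₖ, x_{N k})ₓ ≥ k - 3c₀/2`, so hyperbolicity gives `(yₖ, xₙ)ₓ ≥ k - 3c₀/2 - δ` for all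
`n ≥ N k`, and comparing `yⱼ` and `yₖ` through a common far `xₙ` gives
`(yⱼ, yₖ)ₓ ≳ min j k`. Since also `d(x, yₖ) ≈ k`, the map `k ↦ yₖ` is a rough geodesic ray
indexed by `ℕ`, and `t ↦ y_{⌊t⌋}` is the required ray.
-/

open Set

section

variable {X : Type*} [MetricSpace X]

theorem gromovProd_comm (o x y : X) : gromovProd o x y = gromovProd o y x := by
  simp only [gromovProd, dist_comm x y, add_comm (dist o x)]

theorem gromovProd_self (o x : X) : gromovProd o x x = dist o x := by
  simp [gromovProd]

theorem gromovProd_le_dist (o x y : X) : gromovProd o x y ≤ dist o x := by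
  unfold gromovProd
  linarith [dist_triangle o x y]

theorem HyperbolicWith.nonneg {δ : ℝ} (hX : HyperbolicWith X δ) (x : X) : 0 ≤ δ := by
  simpa [gromovProd] using hX x x x x

theorem RoughlyGeodesicWith.nonneg {c : ℝ} (hX : RoughlyGeodesicWith X c) (x : X) : 0 ≤ c := by
  obtain ⟨a, b, hab, γ, -, -, hγ⟩ := hX x x
  simpa using hγ a ⟨le_rfl, hab⟩ a ⟨le_rfl, hab⟩

theorem abs_dist_sub_le_of_roughGeodesic {C a b s t : ℝ} {γ : ℝ → X}
    (hγ : ∀ s ∈ Icc a b, ∀ t ∈ Icc a b, abs (dist (γ s) (γ t) - |s - t|) ≤ C)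
    (has : a ≤ s) (hst : s ≤ t) (htb : t ≤ b) :
    |dist (γ s) (γ t) - (t - s)| ≤ C := by
  simpa [abs_sub_comm s t, abs_of_nonneg (sub_nonneg.2 hst)] using
    hγ s ⟨has, hst.trans htb⟩ t ⟨has.trans hst, htb⟩

theorem gromovProd_ge_of_roughGeodesic {C a b s : ℝ} {γ : ℝ → X}
    (hγ : ∀ s ∈ Icc a b, ∀ t ∈ Icc a b, abs (dist (γ s) (γ t) - |s - t|) ≤ C)
    (has : a ≤ s) (hsb : s ≤ b) :
    s - a - 3 * C / 2 ≤ gromovProd (γ a) (γ s) (γ b) := by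
  have h₁ := abs_le.1 (abs_dist_sub_le_of_roughGeodesic hγ le_rfl has hsb)
  have h₂ := abs_le.1 (abs_dist_sub_le_of_roughGeodesic hγ has hsb le_rfl)
  have h₃ := abs_le.1 (abs_dist_sub_le_of_roughGeodesic hγ le_rfl (has.trans hsb) le_rfl)
  unfold gromovProd
  linarith [h₁.1, h₂.2, h₃.1]

theorem abs_dist_sub_le_of_gromovProd_ge {o u v : X} {s t c e : ℝ}
    (hu : |dist o u - s| ≤ c) (hv : |dist o v - t| ≤ c) (he : 0 ≤ e)
    (huv : min s t - e ≤ gromovProd o u v) :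
    abs (dist u v - |s - t|) ≤ 2 * c + 2 * e := by
  have := dist_triangle o u v
  have := dist_triangle o v u
  rw [dist_comm v u] at this
  unfold gromovProd at huv
  rw [abs_le] at hu hv ⊢
  rcases le_total s t with hst | hts
  · rw [min_eq_left hst, abs_of_nonpos (sub_nonpos.2 hst)] at *
    constructor <;> linarith
  · rw [min_eq_right hts, abs_of_nonneg (sub_nonneg.2 hts)] at *
    constructor <;> linarith

theorem HyperbolicWith.sub_le_gromovProd {δ r : ℝ} (hX : HyperbolicWith X δ) {w x y z : X}
    (hxy : r ≤ gromovProd w x y) (hyz : r ≤ gromovProd w y z) : r - δ ≤ gromovProd w x z :=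
  (sub_le_sub_right (le_min hxy hyz) δ).trans (hX w x y z)

theorem HyperbolicWith.abs_dist_sub_le {δ c e : ℝ} (hX : HyperbolicWith X δ) {x : X}
    {xs : ℕ → X} {y : ℕ → X} (hy : ∀ k : ℕ, |dist x (y k) - k| ≤ c)
    (hyxs : ∀ k : ℕ, ∀ᶠ n in atTop, k - e ≤ gromovProd x (y k) (xs n)) (he : 0 ≤ e)
    (j k : ℕ) :
    abs (dist (y j) (y k) - |(j : ℝ) - k|) ≤ 2 * c + 2 * (e + δ) := by
  obtain ⟨n, hjn, hkn⟩ := ((hyxs j).and (hyxs k)).exists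
  rw [gromovProd_comm] at hkn
  have hjk : min (j : ℝ) k - e - δ ≤ gromovProd x (y j) (y k) :=
    hX.sub_le_gromovProd (by linarith [min_le_left (j : ℝ) k])
      (by linarith [min_le_right (j : ℝ) k])
  exact abs_dist_sub_le_of_gromovProd_ge (hy j) (hy k) (by linarith [hX.nonneg x])
    (by linarith)

theorem RoughlyGeodesicWith.exists_seq_toward_cauchyGromov {δ c : ℝ}
    (hXhyp : HyperbolicWith X δ) (hXrg : RoughlyGeodesicWith X c) {x : X} {xs : ℕ → X}
    (hxs : CauchyGromov x xs) :
    ∃ y : ℕ → X, y 0 = x ∧ (∀ k : ℕ, |dist x (y k) - k| ≤ c) ∧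
      ∀ k : ℕ, ∀ᶠ n in atTop, k - (3 * c / 2 + δ) ≤ gromovProd x (y k) (xs n) := by
  have hc := hXrg.nonneg x
  choose N hN using fun k : ℕ => hxs (k + c)
  choose a b hab γ hγa hγb hγ using fun k : ℕ => hXrg x (xs (N k))
  have hlen (k : ℕ) : (k : ℝ) ≤ b k - a k := by
    have hd := hN k (N k) le_rfl (N k) le_rfl
    have hab' := abs_le.1 (abs_dist_sub_le_of_roughGeodesic (hγ k) le_rfl (hab k) le_rfl)
    rw [gromovProd_self, ← hγa k, ← hγb k] at hd
    linarith [hab'.2]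
  have hak (k : ℕ) : a k ≤ a k + k := le_add_of_nonneg_right k.cast_nonneg
  have hkb (k : ℕ) : a k + k ≤ b k := by linarith [hlen k]
  refine ⟨fun k => γ k (a k + k), by simpa using hγa 0, fun k => ?_, fun k => ?_⟩
  · simpa [hγa k] using abs_dist_sub_le_of_roughGeodesic (hγ k) le_rfl (hak k) (hkb k)
  · filter_upwards [eventually_ge_atTop (N k)] with n hn
    have hnear := gromovProd_ge_of_roughGeodesic (hγ k) (hak k) (hkb k)
    rw [hγa k, hγb k, add_sub_cancel_left] at hnear
    have hfar := hN k (N k) le_rfl n hn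
    have hmid : k - 3 * c / 2 ≤ gromovProd x (xs (N k)) (xs n) := by linarith
    linarith [hXhyp.sub_le_gromovProd hnear hmid]

theorem abs_dist_comp_floor_sub_le {y : ℕ → X} {K : ℝ}
    (hy : ∀ j k : ℕ, abs (dist (y j) (y k) - |(j : ℝ) - k|) ≤ K) {s t : ℝ}
    (hs : 0 ≤ s) (ht : 0 ≤ t) :
    abs (dist (y ⌊s⌋₊) (y ⌊t⌋₊) - |s - t|) ≤ K + 1 := by
  have hfloor : |((⌊s⌋₊ : ℝ) - ⌊t⌋₊) - (s - t)| ≤ 1 := by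
    rw [abs_le]
    constructor <;> linarith [Nat.floor_le hs, Nat.lt_floor_add_one s, Nat.floor_le ht,
      Nat.lt_floor_add_one t]
  exact (abs_sub_le _ _ _).trans
    (add_le_add (hy _ _) ((abs_abs_sub_abs_le_abs_sub _ _).trans hfloor))

theorem le_liminf_gromovProd {o p : X} {xs : ℕ → X} {r : ℝ}
    (h : ∀ᶠ n in atTop, r ≤ gromovProd o p (xs n)) :
    r ≤ liminf (fun n => gromovProd o p (xs n)) atTop :=
  le_liminf_of_le
    (isBoundedUnder_of ⟨dist o p, fun n => gromovProd_le_dist o p (xs n)⟩).isCoboundedUnder_ge h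

end

theorem exists_roughRay_to_boundary_general
    {X : Type*} [MetricSpace X] (δ c₀ : ℝ)
    (hXhyp : HyperbolicWith X δ) (hXrg : RoughlyGeodesicWith X c₀) :
    ∃ C ≥ (0:ℝ), ∀ x : X, ∀ xs : ℕ → X, CauchyGromov x xs →
      ∃ γ : ℝ → X, γ 0 = x ∧
        (∀ s t : ℝ, 0 ≤ s → 0 ≤ t → abs (dist (γ s) (γ t) - |s - t|) ≤ C) ∧
        (∀ M : ℝ, ∃ T : ℝ, ∀ t ≥ T,
          M ≤ liminf (fun n => gromovProd x (γ t) (xs n)) atTop) := by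
  -- `0 ≤ δ` and `0 ≤ c₀` are only available once a point of `X` is given
  refine ⟨max (5 * c₀ + 4 * δ + 1) 0, le_max_right _ _, fun x xs hxs => ?_⟩
  obtain ⟨y, hy0, hy, hyxs⟩ := hXrg.exists_seq_toward_cauchyGromov hXhyp hxs
  have hyy := hXhyp.abs_dist_sub_le hy hyxs (by linarith [hXhyp.nonneg x, hXrg.nonneg x])
  refine ⟨fun t => y ⌊t⌋₊, by simpa using hy0, fun s t hs ht => ?_, fun M => ?_⟩
  · refine (abs_dist_comp_floor_sub_le hyy hs ht).trans (le_max_of_le_left ?_)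
    linarith
  · refine ⟨M + 3 * c₀ / 2 + δ + 1, fun t ht => ?_⟩
    refine le_trans ?_ (le_liminf_gromovProd (hyxs ⌊t⌋₊))
    linarith [Nat.lt_floor_add_one t]

/-- In a roughly geodesic hyperbolic space, every point and every boundary point
(represented by a Cauchy–Gromov sequence) are joined by a rough geodesic ray with
uniform constant. -/
theorem exists_roughRay_to_boundary
    {X : Type*} [MetricSpace X] (δ c₀ : ℝ) (hδ : 0 ≤ δ) (hc₀ : 0 ≤ c₀)
    (hXhyp : HyperbolicWith X δ) (hXrg : RoughlyGeodesicWith X c₀) :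
    ∃ C ≥ (0:ℝ), ∀ x : X, ∀ xs : ℕ → X, CauchyGromov x xs →
      ∃ γ : ℝ → X, γ 0 = x ∧
        (∀ s t : ℝ, 0 ≤ s → 0 ≤ t → abs (dist (γ s) (γ t) - |s - t|) ≤ C) ∧
        (∀ M : ℝ, ∃ T : ℝ, ∀ t ≥ T,
          M ≤ liminf (fun n => gromovProd x (γ t) (xs n)) atTop) :=
  exists_roughRay_to_boundary_general δ c₀ hXhyp hXrg
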